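/- arXiv:1103.4456 — 2 statements merged into one kernel-verified Lean document; each statement's English description precedes it below -/
import Mathlib

section
/- Suppose (x, y) ∈ ℝ^{n−3} × ℝ^{n−3} satisfies all the constraints of the quadratic program: ‖v_i − v_j‖ ≤ 1 for all 1 ≤ i, j ≤ n; ‖v_{⌊n/4⌋} − v_{⌈3n/4⌉}‖ = 1; x_i² + y_i² = 1 and y_i ≥ 0 for i = 1, …, n−3; 0 ≤ x_1 ≤ 1/2; and 0 ≤ x_i ≤ 1 for i = 2, …, n−3. Then the substituted point (x̂, ŷ) = σ(x, y) satisfies all the same constraints (with its own vertices v̂_i built from (x̂, ŷ)), and the objective values coincide: A_n(x̂, ŷ) = A_n(x, y). -/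
/-- The points `u_k = (x_1 + ∑_{i=1}^k (−1)^i x_{2i}, y_1 + ∑_{i=1}^k (−1)^i y_{2i})`. -/
noncomputable def uPt (x y : ℕ → ℝ) (k : ℕ) : ℝ × ℝ :=
  (x 1 + ∑ i ∈ Finset.Icc 1 k, (-1 : ℝ) ^ i * x (2 * i),
   y 1 + ∑ i ∈ Finset.Icc 1 k, (-1 : ℝ) ^ i * y (2 * i))

/-- The points `w_k = (∑_{i=0}^k (−1)^{i+1} x_{2i+1}, ∑_{i=0}^k (−1)^i y_{2i+1})`. -/
noncomputable def wPt (x y : ℕ → ℝ) (k : ℕ) : ℝ × ℝ :=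
  (∑ i ∈ Finset.range (k + 1), (-1 : ℝ) ^ (i + 1) * x (2 * i + 1),
   ∑ i ∈ Finset.range (k + 1), (-1 : ℝ) ^ i * y (2 * i + 1))

/-- The vertices of the polygon: `v_n = (0,0)`, `v_{n/2} = (0,1)`,
`v_i = u_{2i−1}` and `v_{n−i} = w_{2i−1}` for `i = 1, …, ⌊(n−2)/4⌋`, and
`v_{n/2−i} = w_{2(i−1)}`, `v_{n/2+i} = u_{2(i−1)}` for `i = 1, …, ⌈(n−2)/4⌉`. -/
noncomputable def vPt (n : ℕ) (x y : ℕ → ℝ) (i : ℕ) : ℝ × ℝ :=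
  if i = n / 2 then (0, 1)
  else if 1 ≤ i ∧ i ≤ (n - 2) / 4 then uPt x y (2 * i - 1)
  else if i < n / 2 then wPt x y (2 * (n / 2 - i - 1))
  else if n / 2 < i ∧ i ≤ n / 2 + ((n - 2) + 3) / 4 then uPt x y (2 * (i - n / 2 - 1))
  else if i < n then wPt x y (2 * (n - i) - 1)
  else (0, 0)

/-- The substitution `σ` swapping `x_{2i} ↔ x_{2i+1}` for each `i ≥ 1`,
and fixing `x_1` (and the irrelevant `x_0`). -/
noncomputable def subst (x : ℕ → ℝ) (k : ℕ) : ℝ :=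
  if k ≤ 1 then x k
  else if k % 2 = 0 then x (k + 1) else x (k - 1)

/-- The area objective
`A_n(x,y) = x_1 + (1/2) ∑_{i=1, i∉{n/2−1,n/2}}^{n−2} (ȳ_i x̄_{i+1} − x̄_i ȳ_{i+1})`
where `v_i = (x̄_i, ȳ_i)`. -/
noncomputable def areaObj (n : ℕ) (x y : ℕ → ℝ) : ℝ :=
  x 1 + (1 / 2) *
    ∑ i ∈ (Finset.Icc 1 (n - 2)).filter (fun i => i ≠ n / 2 - 1 ∧ i ≠ n / 2),
      ((vPt n x y i).2 * (vPt n x y (i + 1)).1 - (vPt n x y i).1 * (vPt n x y (i + 1)).2)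

/-- The constraints of the quadratic program: `‖v_i − v_j‖² ≤ 1` for all `1 ≤ i, j ≤ n`;
`‖v_{⌊n/4⌋} − v_{⌈3n/4⌉}‖² = 1`; `x_i² + y_i² = 1` and `y_i ≥ 0` for `i = 1, …, n−3`;
`0 ≤ x_1 ≤ 1/2`; and `0 ≤ x_i ≤ 1` for `i = 2, …, n−3`. -/
def Feasible (n : ℕ) (x y : ℕ → ℝ) : Prop :=
  (∀ i j, 1 ≤ i → i ≤ n → 1 ≤ j → j ≤ n →
      ((vPt n x y i).1 - (vPt n x y j).1) ^ 2 + ((vPt n x y i).2 - (vPt n x y j).2) ^ 2 ≤ 1) ∧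
  (((vPt n x y (n / 4)).1 - (vPt n x y ((3 * n + 3) / 4)).1) ^ 2 +
      ((vPt n x y (n / 4)).2 - (vPt n x y ((3 * n + 3) / 4)).2) ^ 2 = 1) ∧
  (∀ i, 1 ≤ i → i ≤ n - 3 → (x i) ^ 2 + (y i) ^ 2 = 1) ∧
  (∀ i, 1 ≤ i → i ≤ n - 3 → 0 ≤ y i) ∧
  (0 ≤ x 1 ∧ x 1 ≤ 1 / 2) ∧
  (∀ i, 2 ≤ i → i ≤ n - 3 → 0 ≤ x i ∧ x i ≤ 1)

lemma subst_one (x : ℕ → ℝ) : subst x 1 = x 1 := by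
  unfold subst; rw [if_pos (by omega)]

lemma subst_even (x : ℕ → ℝ) (i : ℕ) (hi : 1 ≤ i) : subst x (2 * i) = x (2 * i + 1) := by
  unfold subst; rw [if_neg (by omega), if_pos (by omega)]

lemma subst_odd (x : ℕ → ℝ) (i : ℕ) (hi : 1 ≤ i) : subst x (2 * i + 1) = x (2 * i) := by
  unfold subst; rw [if_neg (by omega), if_neg (by omega), show 2*i+1-1 = 2*i from rfl]

lemma range_succ_sum (f : ℕ → ℝ) (k : ℕ) :
    ∑ i ∈ Finset.range (k + 1), f i = f 0 + ∑ i ∈ Finset.Icc 1 k, f i := by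
  induction k with
  | zero => simp
  | succ k ih =>
    rw [Finset.sum_range_succ, ih, Finset.sum_Icc_succ_top (by omega : 1 ≤ k + 1)]
    ring

lemma uPt_subst (x y : ℕ → ℝ) (k : ℕ) :
    uPt (subst x) (subst y) k = (-(wPt x y k).1, (wPt x y k).2) := by
  unfold uPt wPt
  have hx : ∑ i ∈ Finset.Icc 1 k, (-1 : ℝ) ^ i * subst x (2 * i)
      = ∑ i ∈ Finset.Icc 1 k, (-1 : ℝ) ^ i * x (2 * i + 1) :=
    Finset.sum_congr rfl fun i hi => by rw [subst_even x i (Finset.mem_Icc.mp hi).1]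
  have hy : ∑ i ∈ Finset.Icc 1 k, (-1 : ℝ) ^ i * subst y (2 * i)
      = ∑ i ∈ Finset.Icc 1 k, (-1 : ℝ) ^ i * y (2 * i + 1) :=
    Finset.sum_congr rfl fun i hi => by rw [subst_even y i (Finset.mem_Icc.mp hi).1]
  rw [Prod.mk.injEq]
  constructor
  · rw [hx, subst_one,
      range_succ_sum (fun i => (-1 : ℝ) ^ (i + 1) * x (2 * i + 1)) k]
    have h2 : ∑ i ∈ Finset.Icc 1 k, (-1 : ℝ) ^ (i + 1) * x (2 * i + 1)
        = ∑ i ∈ Finset.Icc 1 k, -((-1 : ℝ) ^ i * x (2 * i + 1)) :=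
      Finset.sum_congr rfl fun i _ => by ring
    rw [h2, Finset.sum_neg_distrib]
    norm_num
    try ring
  · rw [hy, subst_one,
      range_succ_sum (fun i => (-1 : ℝ) ^ i * y (2 * i + 1)) k]
    norm_num
    try ring

lemma wPt_subst (x y : ℕ → ℝ) (k : ℕ) :
    wPt (subst x) (subst y) k = (-(uPt x y k).1, (uPt x y k).2) := by
  unfold uPt wPt
  rw [Prod.mk.injEq]
  constructor
  · rw [range_succ_sum (fun i => (-1 : ℝ) ^ (i + 1) * subst x (2 * i + 1)) k]
    have hx : ∑ i ∈ Finset.Icc 1 k, (-1 : ℝ) ^ (i + 1) * subst x (2 * i + 1)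
        = ∑ i ∈ Finset.Icc 1 k, -((-1 : ℝ) ^ i * x (2 * i)) :=
      Finset.sum_congr rfl fun i hi => by
        rw [subst_odd x i (Finset.mem_Icc.mp hi).1]; ring
    rw [hx, Finset.sum_neg_distrib]
    simp [subst_one]
    try ring
  · rw [range_succ_sum (fun i => (-1 : ℝ) ^ i * subst y (2 * i + 1)) k]
    have hy : ∑ i ∈ Finset.Icc 1 k, (-1 : ℝ) ^ i * subst y (2 * i + 1)
        = ∑ i ∈ Finset.Icc 1 k, (-1 : ℝ) ^ i * y (2 * i) :=
      Finset.sum_congr rfl fun i hi => by rw [subst_odd y i (Finset.mem_Icc.mp hi).1]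
    rw [hy]
    simp [subst_one]
    try ring

lemma vPt_center (n : ℕ) (x y : ℕ → ℝ) (i : ℕ) (h : i = n / 2) :
    vPt n x y i = (0, 1) := by unfold vPt; rw [if_pos h]

lemma vPt_u1 (n : ℕ) (x y : ℕ → ℝ) (i : ℕ) (h0 : ¬ i = n / 2)
    (h : 1 ≤ i ∧ i ≤ (n - 2) / 4) : vPt n x y i = uPt x y (2 * i - 1) := by
  unfold vPt; rw [if_neg h0, if_pos h]

lemma vPt_w2 (n : ℕ) (x y : ℕ → ℝ) (i : ℕ) (h0 : ¬ i = n / 2)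
    (h1 : ¬ (1 ≤ i ∧ i ≤ (n - 2) / 4)) (h2 : i < n / 2) :
    vPt n x y i = wPt x y (2 * (n / 2 - i - 1)) := by
  unfold vPt; rw [if_neg h0, if_neg h1, if_pos h2]

lemma vPt_u2 (n : ℕ) (x y : ℕ → ℝ) (i : ℕ) (h0 : ¬ i = n / 2)
    (h1 : ¬ (1 ≤ i ∧ i ≤ (n - 2) / 4)) (h2 : ¬ i < n / 2)
    (h3 : n / 2 < i ∧ i ≤ n / 2 + ((n - 2) + 3) / 4) :
    vPt n x y i = uPt x y (2 * (i - n / 2 - 1)) := by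
  unfold vPt; rw [if_neg h0, if_neg h1, if_neg h2, if_pos h3]

lemma vPt_w1 (n : ℕ) (x y : ℕ → ℝ) (i : ℕ) (h0 : ¬ i = n / 2)
    (h1 : ¬ (1 ≤ i ∧ i ≤ (n - 2) / 4)) (h2 : ¬ i < n / 2)
    (h3 : ¬ (n / 2 < i ∧ i ≤ n / 2 + ((n - 2) + 3) / 4)) (h4 : i < n) :
    vPt n x y i = wPt x y (2 * (n - i) - 1) := by
  unfold vPt; rw [if_neg h0, if_neg h1, if_neg h2, if_neg h3, if_pos h4]

lemma vPt_zero (n : ℕ) (x y : ℕ → ℝ) (i : ℕ) (h0 : ¬ i = n / 2)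
    (h1 : ¬ (1 ≤ i ∧ i ≤ (n - 2) / 4)) (h2 : ¬ i < n / 2)
    (h3 : ¬ (n / 2 < i ∧ i ≤ n / 2 + ((n - 2) + 3) / 4)) (h4 : ¬ i < n) :
    vPt n x y i = (0, 0) := by
  unfold vPt; rw [if_neg h0, if_neg h1, if_neg h2, if_neg h3, if_neg h4]

lemma vPt_top (n : ℕ) (hn : 6 ≤ n) (hne : Even n) (x y : ℕ → ℝ) :
    vPt n x y n = (0, 0) := by
  obtain ⟨m, hm⟩ := hne
  exact vPt_zero n x y n (by omega) (by omega) (by omega) (by omega) (by omega)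

lemma vPt_subst_eq (n : ℕ) (hn : 6 ≤ n) (hne : Even n) (x y : ℕ → ℝ) (i : ℕ)
    (hi1 : 1 ≤ i) (hi2 : i ≤ n - 1) :
    vPt n (subst x) (subst y) i
      = (-(vPt n x y (n - i)).1, (vPt n x y (n - i)).2) := by
  obtain ⟨m, hm⟩ := hne
  by_cases hA : i ≤ (n - 2) / 4
  · -- case A : 1 ≤ i ≤ ⌊(n-2)/4⌋
    rw [vPt_u1 n (subst x) (subst y) i (by omega) ⟨hi1, hA⟩, uPt_subst,
      vPt_w1 n x y (n - i) (by omega) (by omega) (by omega) (by omega) (by omega),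
      show 2 * (n - (n - i)) - 1 = 2 * i - 1 from by omega]
  · by_cases hB : i < n / 2
    · -- case B
      rw [vPt_w2 n (subst x) (subst y) i (by omega) (by omega) hB, wPt_subst,
        vPt_u2 n x y (n - i) (by omega) (by omega) (by omega) (by omega),
        show 2 * (n - i - n / 2 - 1) = 2 * (n / 2 - i - 1) from by omega]
    · by_cases hC : i = n / 2
      · rw [vPt_center n (subst x) (subst y) i hC,
          vPt_center n x y (n - i) (by omega)]
        norm_num
      · by_cases hD : i ≤ n / 2 + ((n - 2) + 3) / 4
        · -- case C
          rw [vPt_u2 n (subst x) (subst y) i hC (by omega) hB ⟨by omega, hD⟩, uPt_subst,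
            vPt_w2 n x y (n - i) (by omega) (by omega) (by omega),
            show 2 * (n / 2 - (n - i) - 1) = 2 * (i - n / 2 - 1) from by omega]
        · -- case D
          rw [vPt_w1 n (subst x) (subst y) i hC (by omega) hB (by omega) (by omega),
            wPt_subst,
            vPt_u1 n x y (n - i) (by omega) ⟨by omega, by omega⟩,
            show 2 * (n - i) - 1 = 2 * (n - i) - 1 from rfl]

lemma vPt_subst_all (n : ℕ) (hn : 6 ≤ n) (hne : Even n) (x y : ℕ → ℝ) (i : ℕ)
    (hi1 : 1 ≤ i) (hi2 : i ≤ n) :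
    vPt n (subst x) (subst y) i
      = (-(vPt n x y (if i = n then n else n - i)).1,
         (vPt n x y (if i = n then n else n - i)).2) := by
  by_cases h : i = n
  · rw [if_pos h, h, vPt_top n hn hne, vPt_top n hn hne]
    norm_num
  · rw [if_neg h]
    exact vPt_subst_eq n hn hne x y i hi1 (by omega)

lemma subst_index (n i : ℕ) (hn : 6 ≤ n) (hne : Even n) (h1 : 1 ≤ i) (h2 : i ≤ n - 3) :
    ∃ j, 1 ≤ j ∧ j ≤ n - 3 ∧ (2 ≤ i → 2 ≤ j) ∧ ∀ z : ℕ → ℝ, subst z i = z j := by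
  obtain ⟨m, hm⟩ := hne
  by_cases h : i ≤ 1
  · exact ⟨i, h1, h2, by omega, fun z => by unfold subst; rw [if_pos h]⟩
  · by_cases he : i % 2 = 0
    · exact ⟨i + 1, by omega, by omega, by omega,
        fun z => by unfold subst; rw [if_neg h, if_pos he]⟩
    · exact ⟨i - 1, by omega, by omega, by omega,
        fun z => by unfold subst; rw [if_neg h, if_neg he]⟩

/-- The quadratic program is invariant under the substitution `σ`: if `(x, y)` is feasible
then so is `σ(x, y)`, and the objective values coincide. -/
theorem quadratic_program_invariant (n : ℕ) (hn : 6 ≤ n) (hne : Even n)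
    (x y : ℕ → ℝ) (hfeas : Feasible n x y) :
    Feasible n (subst x) (subst y) ∧ areaObj n (subst x) (subst y) = areaObj n x y := by
  obtain ⟨hdist, hdiam, hcirc, hypos, hx1, hxi⟩ := hfeas
  constructor
  · refine ⟨?_, ?_, ?_, ?_, ?_, ?_⟩
    · intro i j hi1 hi2 hj1 hj2
      rw [vPt_subst_all n hn hne x y i hi1 hi2, vPt_subst_all n hn hne x y j hj1 hj2]
      set i' := if i = n then n else n - i with hi'
      set j' := if j = n then n else n - j with hj'
      have hb1 : 1 ≤ i' ∧ i' ≤ n := by rw [hi']; split_ifs <;> omega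
      have hb2 : 1 ≤ j' ∧ j' ≤ n := by rw [hj']; split_ifs <;> omega
      have h := hdist i' j' hb1.1 hb1.2 hb2.1 hb2.2
      have e : (-(vPt n x y i').1 - -(vPt n x y j').1) ^ 2
          = ((vPt n x y i').1 - (vPt n x y j').1) ^ 2 := by ring
      rw [e]
      exact h
    · have hm' := hne
      obtain ⟨m, hm⟩ := hm'
      rw [vPt_subst_eq n hn hne x y _ (by omega) (by omega),
        vPt_subst_eq n hn hne x y _ (by omega) (by omega),
        show n - n / 4 = (3 * n + 3) / 4 from by omega,
        show n - (3 * n + 3) / 4 = n / 4 from by omega]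
      linear_combination hdiam
    · intro i hi1 hi2
      obtain ⟨j, hj1, hj2, _, hz⟩ := subst_index n i hn hne hi1 hi2
      rw [hz x, hz y]
      exact hcirc j hj1 hj2
    · intro i hi1 hi2
      obtain ⟨j, hj1, hj2, _, hz⟩ := subst_index n i hn hne hi1 hi2
      rw [hz y]
      exact hypos j hj1 hj2
    · rw [subst_one]
      exact hx1
    · intro i hi1 hi2
      obtain ⟨j, hj1, hj2, hj3, hz⟩ := subst_index n i hn hne (by omega) hi2
      rw [hz x]
      exact hxi j (hj3 hi1) hj2
  · unfold areaObj
    rw [subst_one]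
    have hsum :
        ∑ i ∈ (Finset.Icc 1 (n - 2)).filter (fun i => i ≠ n / 2 - 1 ∧ i ≠ n / 2),
          ((vPt n (subst x) (subst y) i).2 * (vPt n (subst x) (subst y) (i + 1)).1 -
            (vPt n (subst x) (subst y) i).1 * (vPt n (subst x) (subst y) (i + 1)).2)
        = ∑ i ∈ (Finset.Icc 1 (n - 2)).filter (fun i => i ≠ n / 2 - 1 ∧ i ≠ n / 2),
          ((vPt n x y i).2 * (vPt n x y (i + 1)).1 -
            (vPt n x y i).1 * (vPt n x y (i + 1)).2) := by
      obtain ⟨m, hm⟩ := hne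
      refine Finset.sum_nbij' (fun a => n - 1 - a) (fun a => n - 1 - a) ?_ ?_ ?_ ?_ ?_
      · intro a ha
        simp only [Finset.mem_filter, Finset.mem_Icc] at ha ⊢
        omega
      · intro a ha
        simp only [Finset.mem_filter, Finset.mem_Icc] at ha ⊢
        omega
      · intro a ha
        simp only [Finset.mem_filter, Finset.mem_Icc] at ha
        show n - 1 - (n - 1 - a) = a
        omega
      · intro a ha
        simp only [Finset.mem_filter, Finset.mem_Icc] at ha
        show n - 1 - (n - 1 - a) = a
        omega
      · intro a ha
        simp only [Finset.mem_filter, Finset.mem_Icc] at ha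
        rw [vPt_subst_eq n hn ⟨m, hm⟩ x y a (by omega) (by omega),
          vPt_subst_eq n hn ⟨m, hm⟩ x y (a + 1) (by omega) (by omega),
          show n - (a + 1) = n - 1 - a from by omega,
          show n - 1 - a + 1 = n - a from by omega]
        ring
    rw [hsum]
end

section
/- There exist 10 points in ℝ² whose pairwise Euclidean distances are all at most 1 and whose convex hull has 2-dimensional Lebesgue measure at least 0.74913721. Equivalently, A*_10 ≥ 0.74913721. -/
open MeasureTheory

/-- `maxArea n` is the supremum of the areas (2-dimensional Lebesgue measures of convex
hulls) of sets of at most `n` points in the Euclidean plane whose pairwise Euclidean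
distances are all at most `1`. -/
noncomputable def maxArea (n : ℕ) : ℝ :=
  sSup {a : ℝ | ∃ P : Finset (EuclideanSpace ℝ (Fin 2)),
    P.card ≤ n ∧ (∀ p ∈ P, ∀ q ∈ P, dist p q ≤ 1) ∧
    a = (volume (convexHull ℝ (P : Set (EuclideanSpace ℝ (Fin 2))))).toReal}

/-!
The lower bound is witnessed by an explicit decagon `v 0, …, v 9` of diameter at most `1`,
checked in exact rational arithmetic. Its area is bounded below by the fan triangulation from
`v 0`: because the rays from `v 0` to `v 1, …, v 9` turn counterclockwise, each open triangle
`v 0, v i, v (i + 1)` lies strictly to the left of the ray through `v i`, while the hull of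
`v 0, …, v i` lies weakly to its right. So the triangles are pairwise disjoint, and each has area
`|det|/2` as the affine image of the standard open triangle.
-/

open Pointwise

local notation "ℝ²" => EuclideanSpace ℝ (Fin 2)

def wedge : ℝ² →ₗ[ℝ] ℝ² →ₗ[ℝ] ℝ :=
  LinearMap.mk₂ ℝ (fun u v => u 0 * v 1 - u 1 * v 0)
    (fun _ _ _ => by simp only [PiLp.add_apply]; ring)
    (fun _ _ _ => by simp only [PiLp.smul_apply, smul_eq_mul]; ring)
    (fun _ _ _ => by simp only [PiLp.add_apply]; ring)
    (fun _ _ _ => by simp only [PiLp.smul_apply, smul_eq_mul]; ring)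

@[simp] lemma wedge_apply (u v : ℝ²) : wedge u v = u 0 * v 1 - u 1 * v 0 := rfl

lemma wedge_self (u : ℝ²) : wedge u u = 0 := by simp [mul_comm]

lemma wedge_swap (u v : ℝ²) : wedge v u = -wedge u v := by simp; ring

lemma sq_dist_eq (u v : ℝ²) : dist u v ^ 2 = (u 0 - v 0) ^ 2 + (u 1 - v 1) ^ 2 := by
  rw [EuclideanSpace.dist_eq, Real.sq_sqrt (by positivity), Fin.sum_univ_two,
    Real.dist_eq, Real.dist_eq, sq_abs, sq_abs]

lemma volume_regionBetween_zero_one_sub :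
    volume (regionBetween (fun _ => 0) (fun x : ℝ => 1 - x) (Set.Ioo 0 1)) =
      ENNReal.ofReal (1 / 2) := by
  have hint : IntegrableOn (fun x : ℝ => 1 - x) (Set.Ioo 0 1) :=
    (continuous_const.sub continuous_id).integrableOn_Icc.mono_set Set.Ioo_subset_Icc_self
  rw [Measure.volume_eq_prod, volume_regionBetween_eq_integral
    (integrableOn_const (by simp) (by simp)) hint measurableSet_Ioo
    (fun x hx => by linarith [hx.2]), ← integral_Ioc_eq_integral_Ioo,
    ← intervalIntegral.integral_of_le zero_le_one]
  simp only [Pi.sub_apply, sub_zero]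
  rw [intervalIntegral.integral_sub intervalIntegrable_const
    intervalIntegral.intervalIntegrable_id]
  norm_num

lemma volume_stdOpenTriangle :
    volume {z : ℝ² | 0 < z 0 ∧ 0 < z 1 ∧ z 0 + z 1 < 1} = ENNReal.ofReal (1 / 2) := by
  have hf : MeasurePreserving (fun z : ℝ² => (z 0, z 1)) :=
    (volume_preserving_finTwoArrow ℝ).comp (PiLp.volume_preserving_ofLp (Fin 2))
  have hmeas : MeasurableSet (regionBetween (fun _ => 0) (fun x : ℝ => 1 - x) (Set.Ioo 0 1)) :=
    measurableSet_regionBetween measurable_const (by fun_prop) measurableSet_Ioo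
  rw [← volume_regionBetween_zero_one_sub, ← hf.measure_preimage hmeas.nullMeasurableSet]
  congr 1
  ext z
  simp only [regionBetween, Set.mem_preimage, Set.mem_ofPred_eq, Set.mem_Ioo]
  constructor
  · rintro ⟨h0, h1, h01⟩; exact ⟨⟨h0, by linarith⟩, h1, by linarith⟩
  · rintro ⟨⟨h0, -⟩, h1, h01⟩; exact ⟨h0, h1, by linarith⟩

def openTriangle (p q r : ℝ²) : Set ℝ² :=
  {z | ∃ s t : ℝ, 0 < s ∧ 0 < t ∧ s + t < 1 ∧ z = p + s • (q - p) + t • (r - p)}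

lemma openTriangle_subset_convexHull (p q r : ℝ²) :
    openTriangle p q r ⊆ convexHull ℝ {p, q, r} := by
  rintro _ ⟨s, t, hs, ht, hst, rfl⟩
  have hmem := (convex_convexHull ℝ ({p, q, r} : Set ℝ²)).sum_mem (t := Finset.univ)
    (w := ![1 - s - t, s, t]) (z := ![p, q, r])
    (fun i _ => by fin_cases i <;> simp <;> linarith) (by simp [Fin.sum_univ_three]; ring)
    (fun i _ => by fin_cases i <;> exact subset_convexHull ℝ _ (by simp))
  convert hmem using 1
  simp only [Fin.sum_univ_three]
  simp
  module

lemma openTriangle_subset_wedge_gt {p q r : ℝ²} (h : 0 < wedge (q - p) (r - p)) :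
    openTriangle p q r ⊆ {z | wedge (q - p) p < wedge (q - p) z} := by
  rintro _ ⟨s, t, -, ht, -, rfl⟩
  simp only [Set.mem_ofPred_eq, map_add, map_smul, wedge_self, smul_eq_mul]
  nlinarith

lemma volume_openTriangle (p q r : ℝ²) :
    volume (openTriangle p q r) = ENNReal.ofReal (|wedge (q - p) (r - p)| / 2) := by
  set A : ℝ² →ₗ[ℝ] ℝ² :=
    (EuclideanSpace.proj 0 : ℝ² →L[ℝ] ℝ).toLinearMap.smulRight (q - p) +
      (EuclideanSpace.proj 1 : ℝ² →L[ℝ] ℝ).toLinearMap.smulRight (r - p)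
  have hdet : LinearMap.det A = wedge (q - p) (r - p) := by
    rw [← LinearMap.det_toMatrix (EuclideanSpace.basisFun (Fin 2) ℝ).toBasis,
      Matrix.det_fin_two]
    simp [A, LinearMap.toMatrix_apply]
    ring
  have himage :
      openTriangle p q r = p +ᵥ A '' {z : ℝ² | 0 < z 0 ∧ 0 < z 1 ∧ z 0 + z 1 < 1} := by
    ext z
    simp only [openTriangle, Set.mem_vadd_set, Set.exists_mem_image]
    constructor
    · rintro ⟨s, t, hs, ht, hst, rfl⟩
      exact ⟨!₂[s, t], ⟨by simpa using hs, by simpa using ht, by simpa using hst⟩,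
        by simp [A, add_assoc]⟩
    · rintro ⟨x, ⟨hs, ht, hst⟩, rfl⟩
      exact ⟨x 0, x 1, hs, ht, hst, by simp [A, add_assoc]⟩
  rw [himage, measure_vadd, Measure.addHaar_image_linearMap, hdet, volume_stdOpenTriangle,
    ← ENNReal.ofReal_mul (abs_nonneg _)]
  ring_nf

section Fan

variable {v : ℕ → ℝ²} {n : ℕ}

def IsCCWFan (v : ℕ → ℝ²) (n : ℕ) : Prop :=
  ∀ i j, 0 < i → i < j → j ≤ n → 0 < wedge (v i - v 0) (v j - v 0)

/-- The `i = 0` term is the degenerate triangle `v 0, v 0, v 1` and vanishes. -/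
noncomputable def fanArea (v : ℕ → ℝ²) (n : ℕ) : ℝ :=
  ∑ i ∈ Finset.range n, wedge (v i - v 0) (v (i + 1) - v 0) / 2

lemma IsCCWFan.mono {m : ℕ} (h : IsCCWFan v n) (hmn : m ≤ n) : IsCCWFan v m :=
  fun i j hi hij hjm => h i j hi hij (hjm.trans hmn)

lemma IsCCWFan.apex_ne (h : IsCCWFan v n) (hn : 2 ≤ n) {i : ℕ} (hi : 0 < i) (hin : i ≤ n) :
    v i ≠ v 0 := by
  intro heq
  obtain ⟨k, hk, hki, hkn⟩ : ∃ k, 0 < k ∧ k ≠ i ∧ k ≤ n := by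
    by_cases hi1 : i = 1
    · exact ⟨2, two_pos, by omega, hn⟩
    · exact ⟨1, one_pos, Ne.symm hi1, by omega⟩
  rcases lt_or_gt_of_ne hki with hlt | hlt
  · simpa [heq] using h k i hk hlt hin
  · simpa [heq] using h i k hi hlt hkn

lemma IsCCWFan.injOn (h : IsCCWFan v n) (hn : 2 ≤ n) : Set.InjOn v (Set.Iic n) := by
  have hne : ∀ i j, i < j → j ≤ n → v i ≠ v j := by
    intro i j hij hjn heq
    rcases Nat.eq_zero_or_pos i with rfl | hi
    · exact h.apex_ne hn hij hjn heq.symm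
    · have hpos := h i j hi hij hjn
      rw [heq, wedge_self] at hpos
      exact hpos.false
  intro i hi j hj heq
  by_contra hij
  rcases lt_or_gt_of_ne hij with hlt | hlt
  exacts [hne i j hlt hj heq, hne j i hlt hi heq.symm]

lemma IsCCWFan.convexHull_subset_wedge_le (h : IsCCWFan v n) :
    convexHull ℝ (v '' Set.Iic n) ⊆ {z | wedge (v n - v 0) z ≤ wedge (v n - v 0) (v 0)} := by
  refine convexHull_min ?_ (convex_halfSpace_le (wedge (v n - v 0)).isLinear _)
  rintro _ ⟨i, hin, rfl⟩
  rw [Set.mem_ofPred_eq, ← sub_nonpos, ← map_sub]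
  rcases Nat.eq_zero_or_pos i with rfl | hi
  · simp
  rcases (Set.mem_Iic.mp hin).lt_or_eq with hlt | rfl
  · rw [wedge_swap]
    exact neg_nonpos.mpr (h i n hi hlt le_rfl).le
  · rw [wedge_self]

lemma IsCCWFan.disjoint_convexHull_openTriangle (h : IsCCWFan v (n + 1)) (hn : 0 < n) :
    Disjoint (convexHull ℝ (v '' Set.Iic n)) (openTriangle (v 0) (v n) (v (n + 1))) := by
  refine Set.disjoint_left.mpr fun z hle hgt => ?_
  have hle' : wedge (v n - v 0) z ≤ wedge (v n - v 0) (v 0) :=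
    (h.mono n.le_succ).convexHull_subset_wedge_le hle
  exact hle'.not_gt (openTriangle_subset_wedge_gt (h n (n + 1) hn n.lt_succ_self le_rfl) hgt)

theorem IsCCWFan.ofReal_fanArea_le_volume_convexHull (h : IsCCWFan v n) :
    ENNReal.ofReal (fanArea v n) ≤ volume (convexHull ℝ (v '' Set.Iic n)) := by
  induction n with
  | zero => simp [fanArea]
  | succ n ih =>
    rcases Nat.eq_zero_or_pos n with rfl | hn
    · simp [fanArea]
    have hpos : 0 < wedge (v n - v 0) (v (n + 1) - v 0) := h n (n + 1) hn n.lt_succ_self le_rfl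
    set T := openTriangle (v 0) (v n) (v (n + 1))
    have hmono : convexHull ℝ (v '' Set.Iic n) ⊆ convexHull ℝ (v '' Set.Iic (n + 1)) :=
      convexHull_mono (Set.image_mono (Set.Iic_subset_Iic.mpr n.le_succ))
    have hT : T ⊆ convexHull ℝ (v '' Set.Iic (n + 1)) := by
      refine (openTriangle_subset_convexHull _ _ _).trans (convexHull_mono ?_)
      simp only [Set.insert_subset_iff, Set.singleton_subset_iff]
      exact ⟨Set.mem_image_of_mem v (by simp), Set.mem_image_of_mem v (by simp [n.le_succ]),
        Set.mem_image_of_mem v (by simp)⟩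
    have hclosed : IsClosed (convexHull ℝ (v '' Set.Iic n)) :=
      ((Set.finite_Iic n).image v).isClosed_convexHull ℝ
    calc ENNReal.ofReal (fanArea v (n + 1))
        ≤ ENNReal.ofReal (fanArea v n) +
            ENNReal.ofReal (|wedge (v n - v 0) (v (n + 1) - v 0)| / 2) := by
          rw [fanArea, Finset.sum_range_succ, abs_of_pos hpos]
          exact ENNReal.ofReal_add_le
      _ ≤ volume (convexHull ℝ (v '' Set.Iic n)) + volume T :=
          add_le_add (ih (h.mono n.le_succ)) (volume_openTriangle _ _ _).ge
      _ = volume (convexHull ℝ (v '' Set.Iic n) ∪ T) :=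
          (measure_union' (h.disjoint_convexHull_openTriangle hn) hclosed.measurableSet).symm
      _ ≤ volume (convexHull ℝ (v '' Set.Iic (n + 1))) :=
          measure_mono (Set.union_subset hmono hT)

end Fan

lemma le_maxArea {n : ℕ} {P : Finset ℝ²} (hcard : P.card ≤ n)
    (hdiam : ∀ p ∈ P, ∀ q ∈ P, dist p q ≤ 1) :
    (volume (convexHull ℝ (P : Set ℝ²))).toReal ≤ maxArea n := by
  refine le_csSup ⟨(volume (Metric.closedBall (0 : ℝ²) 1)).toReal, ?_⟩
    ⟨P, hcard, hdiam, rfl⟩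
  rintro _ ⟨Q, -, hQ, rfl⟩
  rcases Q.eq_empty_or_nonempty with rfl | ⟨q, hq⟩
  · simp
  have hsub : convexHull ℝ (Q : Set ℝ²) ⊆ Metric.closedBall q 1 :=
    convexHull_min (fun p hp => hQ p hp q hq) (convex_closedBall q 1)
  refine ENNReal.toReal_mono (isCompact_closedBall _ _).measure_lt_top.ne ?_
  rw [← Measure.addHaar_closedBall_center volume q]
  exact measure_mono hsub

noncomputable def decagonVertex : ℕ → ℝ²
  | 0 => !₂[-0.479513096561460706, -0.174528845476413462]
  | 1 => !₂[-0.240556148278331553, -0.451831425644505719]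
  | 2 => !₂[0.091055549726833350, -0.514676294455971112]
  | 3 => !₂[0.384342752846971738, -0.361713450914859644]
  | 4 => !₂[0.515292226454123316, -0.072733152781800541]
  | 5 => !₂[0.471412538585762380, 0.134890659595328020]
  | 6 => !₂[0.384709745845870759, 0.328580361014258914]
  | 7 => !₂[0.108778387673664836, 0.485166640544500074]
  | 8 => !₂[-0.218363956344908129, 0.436249340691251974]
  | _ => !₂[-0.449496047651511853, 0.190294564429116305]

lemma decagon_isCCWFan : IsCCWFan decagonVertex 9 := by
  intro i j hi hij hj
  interval_cases j <;> interval_cases i <;> norm_num [decagonVertex]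

lemma decagon_fanArea : 0.74913721 ≤ fanArea decagonVertex 9 := by
  norm_num [fanArea, Finset.sum_range_succ, decagonVertex]

lemma decagon_dist_le_one {i j : ℕ} (hi : i ≤ 9) (hj : j ≤ 9) :
    dist (decagonVertex i) (decagonVertex j) ≤ 1 := by
  rw [← pow_le_one_iff_of_nonneg dist_nonneg two_ne_zero, sq_dist_eq]
  interval_cases i <;> interval_cases j <;> norm_num [decagonVertex]

/-- There exist 10 points in the plane with pairwise Euclidean distances at most `1`
whose convex hull has 2-dimensional Lebesgue measure at least `0.74913721`; equivalently,
`A*_10 ≥ 0.74913721`. -/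
theorem maxArea_decagon_lower_bound :
    (∃ P : Finset (EuclideanSpace ℝ (Fin 2)),
      P.card = 10 ∧ (∀ p ∈ P, ∀ q ∈ P, dist p q ≤ 1) ∧
      0.74913721 ≤ (volume (convexHull ℝ (P : Set (EuclideanSpace ℝ (Fin 2))))).toReal) ∧
    0.74913721 ≤ maxArea 10 := by
  classical
  set P := (Finset.Iic 9).image decagonVertex
  have hcoe : (P : Set ℝ²) = decagonVertex '' Set.Iic 9 := by simp [P]
  have hcard : P.card = 10 := by
    rw [Finset.card_image_of_injOn (by simpa using decagon_isCCWFan.injOn (by norm_num))]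
    simp
  have hdiam : ∀ p ∈ P, ∀ q ∈ P, dist p q ≤ 1 := by
    simp only [P, Finset.mem_image, Finset.mem_Iic]
    rintro _ ⟨i, hi, rfl⟩ _ ⟨j, hj, rfl⟩
    exact decagon_dist_le_one hi hj
  have harea : 0.74913721 ≤ (volume (convexHull ℝ (P : Set ℝ²))).toReal := by
    rw [hcoe, ← ENNReal.ofReal_le_iff_le_toReal
      (((Set.finite_Iic 9).image _).isCompact_convexHull ℝ).measure_lt_top.ne]
    exact (ENNReal.ofReal_le_ofReal decagon_fanArea).trans
      decagon_isCCWFan.ofReal_fanArea_le_volume_convexHull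
  exact ⟨⟨P, hcard, hdiam, harea⟩, harea.trans (le_maxArea hcard.le hdiam)⟩
end
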